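/- arXiv:2506.07241 — 6 statements merged into one kernel-verified Lean document; each statement's English description precedes it below -/
import Mathlib

section
/- Let m ≥ 1 and let Q ⊆ ℝ^m be a nonempty finite intersection of closed affine halfspaces such that Q has nonempty interior, Q is unbounded, and Q contains no affine line. Then the one-point compactification OnePoint(Q) of Q (with its subspace topology) is homeomorphic to the closed unit ball {x ∈ ℝ^m : ‖x‖ ≤ 1}. -/
/-!
Translate `Q` so that `0` is an interior point. Pointedness makes `x ↦ ∑ i, |⟪aᵢ, x⟫|` a norm,
which yields a linear functional `f` with `‖x‖ ≤ C (1 + f x)` and `-1/2 ≤ f x` on `Q`. The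
perspective map `x ↦ (1 + f x)⁻¹ • x` is then a homeomorphism from `Q` onto `K ∩ {f < 1}`,
where `K` is a compact convex body with `0` in its interior and `f ≤ 1` on `K`; as `Q` is
unbounded, `K` meets the hyperplane `{f = 1}` at some `q`. The map
`y ↦ (1 - f y) • y + (f y)² • q` preserves `f`, is a homeomorphism of `{f < 1}` and sends
`K ∩ {f = 1}` to `q`. The image `L` of `K` is compact and strictly star-shaped about `0`, so its
gauge is continuous and radial rescaling maps `L` onto the closed unit ball. Hence
`OnePoint Q ≃ₜ OnePoint (L \ {q}) ≃ₜ L ≃ₜ closedBall 0 1`.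
-/

open Set Filter Topology Metric Bornology
open scoped Pointwise

noncomputable def IsCompact.onePointDiffSingletonHomeomorph {X : Type*} [TopologicalSpace X]
    [T2Space X] {L : Set X} (hL : IsCompact L) {q : X} (hq : q ∈ L) :
    OnePoint ↥(L \ {q}) ≃ₜ L :=
  haveI := isCompact_iff_compactSpace.1 hL
  OnePoint.equivOfIsEmbeddingOfRangeEq ⟨q, hq⟩ (inclusion sdiff_subset)
    (IsEmbedding.inclusion sdiff_subset) (by ext ⟨x, hx⟩; simp [Subtype.ext_iff])

namespace OpenPartialHomeomorph

variable {X Y : Type*} [TopologicalSpace X] [TopologicalSpace Y] (e : OpenPartialHomeomorph X Y)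

theorem image_interior_inter_source_subset (s : Set X) :
    e '' (interior s ∩ e.source) ⊆ interior (e '' s) :=
  interior_maximal (image_mono (inter_subset_left.trans interior_subset))
    (e.isOpen_image_of_subset_source (isOpen_interior.inter e.open_source) inter_subset_right)

theorem closure_image_inter_target {s : Set X} (hs : IsClosed s) (hse : s ⊆ e.source) :
    closure (e '' s) ∩ e.target = e '' s := by
  refine Subset.antisymm (fun y ⟨hys, hyt⟩ => ?_) fun y hy => ⟨subset_closure hy, ?_⟩
  · have hsymm : e.symm y ∈ s := by
      have := mem_closure_image (e.continuousAt_symm hyt) hys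
      rwa [(e.leftInvOn.mono hse).image_image, hs.closure_eq] at this
    exact ⟨e.symm y, hsymm, e.right_inv hyt⟩
  · obtain ⟨x, hx, rfl⟩ := hy
    exact e.map_source (hse hx)

end OpenPartialHomeomorph

section StarShaped

variable {E : Type*} [NormedAddCommGroup E] [NormedSpace ℝ E] {L : Set E}

theorem gauge_lt_iff_mem_smul_interior (hL₀ : L ∈ 𝓝 0)
    (hstar : ∀ x ∈ L, ∀ t ∈ Ioo (0 : ℝ) 1, t • x ∈ interior L) {a : ℝ} (ha : 0 < a) {x : E} :
    gauge L x < a ↔ x ∈ a • interior L := by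
  constructor
  · intro hx
    obtain ⟨b, hb₀, hba, p, hp, rfl⟩ := exists_lt_of_gauge_lt (absorbent_nhds_zero hL₀) hx
    refine ⟨(b / a) • p, hstar p hp _ ⟨by positivity, (div_lt_one ha).2 hba⟩, ?_⟩
    simp only [smul_smul, mul_div_cancel₀ _ ha.ne']
  · intro hx
    calc gauge L x ≤ gauge (interior L) x :=
          gauge_mono (absorbent_nhds_zero (interior_mem_nhds.2 hL₀)) interior_subset x
      _ < a := gauge_lt_of_mem_smul x a ha isOpen_interior hx

theorem gauge_le_iff_mem_smul (hLc : IsClosed L) (hL₀ : L ∈ 𝓝 0)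
    (hstar : ∀ x ∈ L, ∀ t ∈ Ioo (0 : ℝ) 1, t • x ∈ interior L) {a : ℝ} (ha : 0 < a) {x : E} :
    gauge L x ≤ a ↔ x ∈ a • L := by
  refine ⟨fun hx => ?_, gauge_le_of_mem ha.le⟩
  rw [mem_smul_set_iff_inv_smul_mem₀ ha.ne']
  have hlim : Tendsto (fun b : ℝ => b⁻¹ • x) (𝓝[>] a) (𝓝 (a⁻¹ • x)) :=
    ((continuousAt_inv₀ ha.ne').tendsto.smul_const x).mono_left nhdsWithin_le_nhds
  refine hLc.mem_of_tendsto hlim (eventually_nhdsWithin_of_forall fun b (hb : a < b) => ?_)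
  have hb₀ : 0 < b := ha.trans hb
  rw [← mem_smul_set_iff_inv_smul_mem₀ hb₀.ne']
  exact smul_set_mono interior_subset
    ((gauge_lt_iff_mem_smul_interior hL₀ hstar hb₀).1 (hx.trans_lt hb))

theorem continuous_gauge_of_smul_mem_interior (hL : IsCompact L) (hL₀ : L ∈ 𝓝 0)
    (hstar : ∀ x ∈ L, ∀ t ∈ Ioo (0 : ℝ) 1, t • x ∈ interior L) : Continuous (gauge L) := by
  refine continuous_iff_lower_upperSemicontinuous.2 ⟨fun x a hax => ?_, fun x a hxa => ?_⟩
  · change a < gauge L x at hax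
    rcases lt_or_ge a 0 with ha | ha
    · exact Eventually.of_forall fun y => ha.trans_le (gauge_nonneg y)
    obtain ⟨b, hab, hbx⟩ := exists_between hax
    have hb₀ : 0 < b := ha.trans_lt hab
    have hx : x ∉ b • L := fun hx =>
      hbx.not_ge ((gauge_le_iff_mem_smul hL.isClosed hL₀ hstar hb₀).2 hx)
    filter_upwards [(hL.smul b).isClosed.isOpen_compl.mem_nhds hx] with y hy
    exact hab.trans (not_le.1 fun h => hy ((gauge_le_iff_mem_smul hL.isClosed hL₀ hstar hb₀).1 h))
  · change gauge L x < a at hxa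
    have ha : 0 < a := (gauge_nonneg x).trans_lt hxa
    have hopen : IsOpen (a • interior L) := isOpen_interior.smul₀ ha.ne'
    filter_upwards [hopen.mem_nhds ((gauge_lt_iff_mem_smul_interior hL₀ hstar ha).1 hxa)] with y hy
    exact (gauge_lt_iff_mem_smul_interior hL₀ hstar ha).2 hy

theorem continuous_gaugeRescale_of_continuous_gauge {s t : Set E} (hs : Continuous (gauge s))
    (ht₀ : t ∈ 𝓝 0) (htb : IsVonNBounded ℝ t) (ht : Continuous (gauge t)) :
    Continuous (gaugeRescale s t) := by
  refine continuous_iff_continuousAt.2 fun x ↦ ?_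
  rcases eq_or_ne x 0 with rfl | hx
  · rw [ContinuousAt, gaugeRescale_zero]
    nth_rewrite 2 [← comap_gauge_nhds_zero htb ht₀]
    simp only [tendsto_comap_iff, Function.comp_def,
      gauge_gaugeRescale _ (absorbent_nhds_zero ht₀) htb]
    simpa [gauge_zero] using hs.tendsto 0
  · exact (hs.continuousAt.div ht.continuousAt
      ((gauge_pos (absorbent_nhds_zero ht₀) htb).2 hx).ne').smul continuousAt_id

theorem exists_homeomorph_image_eq_closedBall (hL : IsCompact L) (hL₀ : L ∈ 𝓝 0)
    (hstar : ∀ x ∈ L, ∀ t ∈ Ioo (0 : ℝ) 1, t • x ∈ interior L) :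
    ∃ e : E ≃ₜ E, e '' L = closedBall 0 1 := by
  have hB₀ : closedBall (0 : E) 1 ∈ 𝓝 0 := closedBall_mem_nhds _ one_pos
  have hBb : IsVonNBounded ℝ (closedBall (0 : E) 1) :=
    NormedSpace.isVonNBounded_closedBall _ _ _
  have hLb : IsVonNBounded ℝ L := NormedSpace.isVonNBounded_of_isBounded _ hL.isBounded
  have hgL := continuous_gauge_of_smul_mem_interior hL hL₀ hstar
  have hgB : Continuous (gauge (closedBall (0 : E) 1)) :=
    continuous_gauge (convex_closedBall _ _) hB₀
  let e : E ≃ₜ E :=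
    { toEquiv := gaugeRescaleEquiv L _ (absorbent_nhds_zero hL₀) hLb (absorbent_nhds_zero hB₀) hBb
      continuous_toFun := continuous_gaugeRescale_of_continuous_gauge hgL hB₀ hBb hgB
      continuous_invFun := continuous_gaugeRescale_of_continuous_gauge hgB hL₀ hLb hgL }
  refine ⟨e, ?_⟩
  ext y
  rw [e.image_eq_preimage_symm, mem_preimage, ← one_smul ℝ L,
    ← gauge_le_iff_mem_smul hL.isClosed hL₀ hstar one_pos, mem_closedBall_zero_iff]
  change gauge L (gaugeRescale _ L y) ≤ 1 ↔ _
  rw [gauge_gaugeRescale _ (absorbent_nhds_zero hL₀) hLb, gauge_closedBall zero_le_one, div_one]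

end StarShaped

section Perspective

variable {E : Type*} [NormedAddCommGroup E] [NormedSpace ℝ E] (f : E →L[ℝ] ℝ)

noncomputable def perspective : OpenPartialHomeomorph E E where
  toFun x := (1 + f x)⁻¹ • x
  invFun y := (1 - f y)⁻¹ • y
  source := {x | 0 < 1 + f x}
  target := {y | f y < 1}
  map_source' x (hx : 0 < 1 + f x) := by
    change f ((1 + f x)⁻¹ • x) < 1
    rw [map_smul, smul_eq_mul, inv_mul_lt_iff₀ hx]
    linarith
  map_target' y (hy : f y < 1) := by
    change 0 < 1 + f ((1 - f y)⁻¹ • y)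
    have : 0 < 1 - f y := by linarith
    rw [map_smul, smul_eq_mul]
    field_simp
    linarith
  left_inv' x (hx : 0 < 1 + f x) := by
    have : 1 + f x ≠ 0 := hx.ne'
    simp only [map_smul, smul_eq_mul, smul_smul]
    match_scalars
    field_simp
    ring
  right_inv' y (hy : f y < 1) := by
    have : 1 - f y ≠ 0 := by linarith
    simp only [map_smul, smul_eq_mul, smul_smul]
    match_scalars
    field_simp
    ring
  open_source := isOpen_lt continuous_const (by fun_prop)
  open_target := isOpen_lt (by fun_prop) continuous_const
  continuousOn_toFun :=
    (ContinuousOn.inv₀ (by fun_prop) fun x (hx : 0 < 1 + f x) => hx.ne').smul continuousOn_id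
  continuousOn_invFun :=
    (ContinuousOn.inv₀ (by fun_prop) fun y (hy : f y < 1) => (sub_pos.2 hy).ne').smul
      continuousOn_id

variable {f}

theorem perspective_apply (x : E) : perspective f x = (1 + f x)⁻¹ • x := rfl

theorem convex_perspective_image {Q : Set E} (hQ : Convex ℝ Q) (hQf : ∀ x ∈ Q, 0 < 1 + f x) :
    Convex ℝ (perspective f '' Q) := by
  rintro _ ⟨x₁, hx₁, rfl⟩ _ ⟨x₂, hx₂, rfl⟩ t₁ t₂ ht₁ ht₂ ht
  have h₁ := hQf x₁ hx₁
  have h₂ := hQf x₂ hx₂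
  set a := t₁ * (1 + f x₁)⁻¹
  set b := t₂ * (1 + f x₂)⁻¹
  have hab : 0 < a + b := by
    rcases ht₁.eq_or_lt with rfl | ht₁
    · simp only [zero_add] at ht
      simp [a, b, ht, h₂]
    · positivity
  refine ⟨(a / (a + b)) • x₁ + (b / (a + b)) • x₂,
    convex_iff_div.1 hQ hx₁ hx₂ (by positivity) (by positivity) hab, ?_⟩
  have ha : a * (1 + f x₁) = t₁ := by simp only [a]; field_simp
  have hb : b * (1 + f x₂) = t₂ := by simp only [b]; field_simp
  have hfz : 1 + f ((a / (a + b)) • x₁ + (b / (a + b)) • x₂) = (a + b)⁻¹ := by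
    simp only [map_add, map_smul, smul_eq_mul]
    field_simp
    linear_combination ha + hb + ht
  rw [perspective_apply, hfz, inv_inv, smul_add, smul_smul, smul_smul, mul_div_cancel₀ _ hab.ne',
    mul_div_cancel₀ _ hab.ne', perspective_apply, perspective_apply, smul_smul, smul_smul]

theorem isBounded_perspective_image {Q : Set E} {C : ℝ} (hQf : ∀ x ∈ Q, 0 < 1 + f x)
    (hC : ∀ x ∈ Q, ‖x‖ ≤ C * (1 + f x)) : IsBounded (perspective f '' Q) := by
  refine isBounded_iff_forall_norm_le.2 ⟨C, ?_⟩
  rintro _ ⟨x, hx, rfl⟩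
  rw [perspective_apply, norm_smul, Real.norm_eq_abs, abs_inv, abs_of_pos (hQf x hx),
    inv_mul_le_iff₀ (hQf x hx), mul_comm]
  exact hC x hx

theorem apply_perspective_mem_Icc {x : E} (hx : -(1 / 2) ≤ f x) :
    f (perspective f x) ∈ Icc (-1) 1 := by
  have h : 0 < 1 + f x := by linarith
  rw [perspective_apply, map_smul, smul_eq_mul]
  constructor
  · rw [le_inv_mul_iff₀ h]; linarith
  · rw [inv_mul_le_iff₀ h]; linarith


section Collapse

variable {E : Type*} [NormedAddCommGroup E] [NormedSpace ℝ E] {f : E →L[ℝ] ℝ}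

theorem apply_sub_smul_add_sq_smul {q : E} (hq : f q = 1) (y : E) :
    f ((1 - f y) • y + f y ^ 2 • q) = f y := by
  simp only [map_add, map_smul, smul_eq_mul, hq]
  ring

theorem apply_inv_smul_sub_sq_smul {q : E} (hq : f q = 1) {y : E} (hy : f y ≠ 1) :
    f ((1 - f y)⁻¹ • (y - f y ^ 2 • q)) = f y := by
  have : 1 - f y ≠ 0 := sub_ne_zero.2 hy.symm
  simp only [map_sub, map_smul, smul_eq_mul, hq]
  field_simp

variable (f) in
noncomputable def collapse (q : E) (hq : f q = 1) : OpenPartialHomeomorph E E where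
  toFun y := (1 - f y) • y + f y ^ 2 • q
  invFun y := (1 - f y)⁻¹ • (y - f y ^ 2 • q)
  source := {y | f y < 1}
  target := {y | f y < 1}
  map_source' y (hy : f y < 1) := by
    change f ((1 - f y) • y + f y ^ 2 • q) < 1
    rwa [apply_sub_smul_add_sq_smul hq]
  map_target' y (hy : f y < 1) := by
    change f ((1 - f y)⁻¹ • (y - f y ^ 2 • q)) < 1
    rwa [apply_inv_smul_sub_sq_smul hq hy.ne]
  left_inv' y (hy : f y < 1) := by
    rw [apply_sub_smul_add_sq_smul hq, add_sub_cancel_right,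
      inv_smul_smul₀ (sub_ne_zero.2 hy.ne')]
  right_inv' y (hy : f y < 1) := by
    rw [apply_inv_smul_sub_sq_smul hq hy.ne, smul_inv_smul₀ (sub_ne_zero.2 hy.ne'), sub_add_cancel]
  open_source := isOpen_lt (by fun_prop) continuous_const
  open_target := isOpen_lt (by fun_prop) continuous_const
  continuousOn_toFun := by fun_prop
  continuousOn_invFun :=
    (ContinuousOn.inv₀ (by fun_prop) fun y (hy : f y < 1) => (sub_pos.2 hy).ne').smul (by fun_prop)

variable {q : E} {hq : f q = 1}

theorem collapse_apply (y : E) : collapse f q hq y = (1 - f y) • y + f y ^ 2 • q := rfl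

theorem continuous_collapse : Continuous (collapse f q hq) := by
  change Continuous fun y => (1 - f y) • y + f y ^ 2 • q
  fun_prop

theorem apply_collapse (y : E) : f (collapse f q hq y) = f y :=
  apply_sub_smul_add_sq_smul hq y

theorem collapse_of_apply_eq_one {y : E} (hy : f y = 1) : collapse f q hq y = q := by
  simp [collapse_apply, hy]

theorem smul_collapse {t : ℝ} {y : E} (hty : t * f y ≠ 1) :
    t • collapse f q hq y = collapse f q hq
      (((1 - t) / (1 - t * f y)) • ((t * f y ^ 2) • q) + (1 - (1 - t) / (1 - t * f y)) • y) := by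
  have : 1 - t * f y ≠ 0 := sub_ne_zero.2 hty.symm
  have hz : f (((1 - t) / (1 - t * f y)) • ((t * f y ^ 2) • q) + (1 - (1 - t) / (1 - t * f y)) • y)
      = t * f y := by
    simp only [map_add, map_smul, smul_eq_mul, hq]
    field_simp
    ring
  rw [collapse_apply, collapse_apply, hz]
  match_scalars <;> field_simp <;> ring

theorem collapse_image_inter_eq_diff {K : Set E} (hfK : ∀ y ∈ K, f y ≤ 1) :
    collapse f q hq '' (K ∩ {y | f y < 1}) = collapse f q hq '' K \ {q} := by
  ext z
  constructor
  · rintro ⟨y, ⟨hyK, hy⟩, rfl⟩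
    refine ⟨mem_image_of_mem _ hyK, fun h => ?_⟩
    have := congrArg f (mem_singleton_iff.1 h)
    rw [apply_collapse, hq] at this
    exact hy.ne this
  · rintro ⟨⟨y, hyK, rfl⟩, hne⟩
    exact ⟨y, ⟨hyK, (hfK y hyK).lt_of_ne fun h => hne (collapse_of_apply_eq_one h)⟩, rfl⟩

/- `t • collapse y` is the collapse of a convex combination of `0`, `q` and `y` whose weights are
nonnegative because `|f y| ≤ 1`. -/
theorem smul_mem_interior_collapse_image {K : Set E} (hK : Convex ℝ K) (hK₀ : 0 ∈ interior K)
    (hqK : q ∈ K) (hfK : ∀ y ∈ K, f y ∈ Icc (-1) 1) {x : E} (hx : x ∈ collapse f q hq '' K)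
    {t : ℝ} (ht : t ∈ Ioo (0 : ℝ) 1) : t • x ∈ interior (collapse f q hq '' K) := by
  obtain ⟨y, hy, rfl⟩ := hx
  obtain ⟨ht₀, ht₁⟩ := ht
  obtain ⟨hy₁, hy₂⟩ := hfK y hy
  have hty : t * f y < 1 := by nlinarith
  have hty₂ : t * f y ^ 2 < 1 := by
    nlinarith [(sq_le_one_iff_abs_le_one (f y)).2 (abs_le.2 ⟨hy₁, hy₂⟩)]
  set s := (1 - t) / (1 - t * f y)
  have hs₀ : 0 < s := div_pos (by linarith) (by linarith)
  have hs₁ : s ≤ 1 := (div_le_one (by linarith)).2 (by nlinarith)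
  have hqt : (t * f y ^ 2) • q ∈ interior K := by
    simpa using hK.combo_interior_self_mem_interior hK₀ hqK (sub_pos.2 hty₂) (by positivity)
      (sub_add_cancel 1 _)
  have hz :=
    hK.combo_interior_self_mem_interior hqt hy hs₀ (sub_nonneg.2 hs₁) (add_sub_cancel s 1)
  have hfz := congrArg f (smul_collapse (hq := hq) hty.ne)
  rw [map_smul, apply_collapse, apply_collapse, smul_eq_mul] at hfz
  rw [smul_collapse hty.ne]
  exact (collapse f q hq).image_interior_inter_source_subset K
    ⟨_, ⟨hz, hfz.symm.trans_lt hty⟩, rfl⟩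

end Collapse

section ConvexBody

variable {E : Type*} [NormedAddCommGroup E] [NormedSpace ℝ E] {Q : Set E} {f : E →L[ℝ] ℝ}

theorem exists_mem_closure_perspective_image_apply_eq_one [ProperSpace E] (hQc : IsClosed Q)
    (hunb : ¬IsBounded Q) (hQf : ∀ x ∈ Q, 0 < 1 + f x) (hb : IsBounded (perspective f '' Q))
    (hle : ∀ y ∈ closure (perspective f '' Q), f y ≤ 1) :
    ∃ q ∈ closure (perspective f '' Q), f q = 1 := by
  by_contra! h
  have hK : closure (perspective f '' Q) ⊆ (perspective f).target := fun y hy =>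
    (hle y hy).lt_of_ne (h y hy)
  have hKQ : (perspective f).symm '' closure (perspective f '' Q) = Q := by
    rw [← inter_eq_left.2 hK, (perspective f).closure_image_inter_target hQc hQf]
    exact ((perspective f).leftInvOn.mono hQf).image_image
  apply hunb
  rw [← hKQ]
  exact (hb.isCompact_closure.image_of_continuousOn
    ((perspective f).continuousOn_symm.mono hK)).isBounded

/- The bound `-1/2 ≤ f` makes `f ≥ -1` on the perspective image, which is what
`smul_mem_interior_collapse_image` needs. -/
theorem nonempty_onePoint_homeomorph_closedBall_of_norm_le_mul [ProperSpace E] (hQconv : Convex ℝ Q)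
    (hQc : IsClosed Q) (hQ₀ : Q ∈ 𝓝 0) (hunb : ¬IsBounded Q) {C : ℝ}
    (hf : ∀ x ∈ Q, -(1 / 2) ≤ f x) (hC : ∀ x ∈ Q, ‖x‖ ≤ C * (1 + f x)) :
    Nonempty (OnePoint Q ≃ₜ closedBall (0 : E) 1) := by
  have hQf : ∀ x ∈ Q, 0 < 1 + f x := fun x hx => by linarith [hf x hx]
  set K := closure (perspective f '' Q)
  have hKb := isBounded_perspective_image hQf hC
  have hfK : ∀ y ∈ K, f y ∈ Icc (-1) 1 := fun y hy =>
    closure_minimal (t := f ⁻¹' Icc (-1) 1)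
      (image_subset_iff.2 fun x hx => apply_perspective_mem_Icc (hf x hx))
      (isClosed_Icc.preimage f.continuous) hy
  have hK₀ : (0 : E) ∈ interior K := interior_mono subset_closure <|
    (perspective f).image_interior_inter_source_subset Q
      ⟨0, ⟨mem_interior_iff_mem_nhds.2 hQ₀, show 0 < 1 + f 0 by simp⟩, by simp [perspective_apply]⟩
  obtain ⟨q, hqK, hq⟩ :=
    exists_mem_closure_perspective_image_apply_eq_one hQc hunb hQf hKb fun y hy => (hfK y hy).2
  set L := collapse f q hq '' K
  have hL : IsCompact L := hKb.isCompact_closure.image continuous_collapse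
  have hL₀ : L ∈ 𝓝 0 := mem_interior_iff_mem_nhds.1 <|
    (collapse f q hq).image_interior_inter_source_subset K
      ⟨0, ⟨hK₀, show f 0 < 1 by simp⟩, by simp [collapse_apply]⟩
  obtain ⟨e, he⟩ := exists_homeomorph_image_eq_closedBall hL hL₀ fun x hx t ht =>
    smul_mem_interior_collapse_image (convex_perspective_image hQconv hQf).closure hK₀ hqK hfK
      hx ht
  let h₁ : Q ≃ₜ ↥(K ∩ {y | f y < 1}) := (perspective f).homeomorphOfImageSubsetSource hQf
    ((perspective f).closure_image_inter_target hQc hQf).symm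
  let h₂ : ↥(K ∩ {y | f y < 1}) ≃ₜ ↥(L \ {q}) :=
    (collapse f q hq).homeomorphOfImageSubsetSource inter_subset_right
      (collapse_image_inter_eq_diff fun y hy => (hfK y hy).2)
  have hqL : q ∈ L := ⟨q, hqK, collapse_of_apply_eq_one hq⟩
  exact ⟨(h₁.trans h₂).onePointCongr.trans <|
    (hL.onePointDiffSingletonHomeomorph hqL).trans <| (e.image L).trans (.setCongr he)⟩

theorem exists_neg_half_le_and_norm_le_mul (hQ₀ : (0 : E) ∈ Q) {D : ℝ}
    (hfD : ∀ x ∈ Q, ‖x‖ ≤ f x + D) :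
    ∃ (g : E →L[ℝ] ℝ) (C : ℝ), (∀ x ∈ Q, -(1 / 2) ≤ g x) ∧ ∀ x ∈ Q, ‖x‖ ≤ C * (1 + g x) := by
  have hD : 0 ≤ D := by simpa using hfD 0 hQ₀
  refine ⟨(2 * D + 1)⁻¹ • f, 2 * D + 1, fun x hx => ?_, fun x hx => ?_⟩
  · rw [smul_apply, smul_eq_mul, le_inv_mul_iff₀ (by positivity)]
    linarith [(norm_nonneg x).trans (hfD x hx)]
  · rw [smul_apply, smul_eq_mul, mul_add, mul_inv_cancel_left₀ (by positivity)]
    linarith [hfD x hx]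

theorem nonempty_onePoint_homeomorph_closedBall_of_norm_le_add [ProperSpace E] (hQconv : Convex ℝ Q)
    (hQc : IsClosed Q) (hint : (interior Q).Nonempty) (hunb : ¬IsBounded Q) {D : ℝ}
    (hfD : ∀ x ∈ Q, ‖x‖ ≤ f x + D) : Nonempty (OnePoint Q ≃ₜ closedBall (0 : E) 1) := by
  obtain ⟨x₀, hx₀⟩ := hint
  set Q' := (x₀ + ·) ⁻¹' Q
  have hQ'₀ : Q' ∈ 𝓝 0 := (continuous_const_add x₀).continuousAt.preimage_mem_nhds
    (by rwa [add_zero, ← mem_interior_iff_mem_nhds])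
  have hfD' : ∀ y ∈ Q', ‖y‖ ≤ f y + (f x₀ + D + ‖x₀‖) := fun y hy => by
    have := norm_sub_le (x₀ + y) x₀
    rw [add_sub_cancel_left] at this
    linarith [hfD _ hy, map_add f x₀ y]
  have hunb' : ¬IsBounded Q' := fun h => hunb <| by
    have := (isometry_add_left x₀).lipschitz.isBounded_image h
    rwa [image_preimage_eq Q (add_left_surjective x₀)] at this
  obtain ⟨g, C, hg, hC⟩ := exists_neg_half_le_and_norm_le_mul (mem_of_mem_nhds hQ'₀) hfD'
  obtain ⟨e⟩ := nonempty_onePoint_homeomorph_closedBall_of_norm_le_mul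
    (hQconv.translate_preimage_right x₀) (hQc.preimage (continuous_const_add x₀)) hQ'₀ hunb' hg hC
  exact ⟨(((Homeomorph.addLeft x₀).image Q').trans
    (.setCongr ((Homeomorph.addLeft x₀).image_preimage Q))).symm.onePointCongr.trans e⟩

end ConvexBody

/- `x ↦ ∑ i, |φ i x|` is a norm, and on the polyhedron `|φ i x| ≤ 2 max (b i) 0 - φ i x`. -/
theorem exists_norm_le_add_of_forall_apply_le {ι E : Type*} [Fintype ι] [NormedAddCommGroup E]
    [NormedSpace ℝ E] [FiniteDimensional ℝ E] (φ : ι → E →L[ℝ] ℝ) (b : ι → ℝ)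
    (hφ : ∀ v, (∀ i, φ i v = 0) → v = 0) :
    ∃ (f : E →L[ℝ] ℝ) (D : ℝ), ∀ x, (∀ i, φ i x ≤ b i) → ‖x‖ ≤ f x + D := by
  let T : E →L[ℝ] ι → ℝ := ContinuousLinearMap.pi φ
  obtain ⟨K, -, hK⟩ := (T : E →ₗ[ℝ] ι → ℝ).exists_antilipschitzWith
    (LinearMap.ker_eq_bot'.2 fun v hv => hφ v fun i => congrFun hv i)
  refine ⟨(K : ℝ) • -∑ i, φ i, K * ∑ i, 2 * max (b i) 0, fun x hx => ?_⟩
  have habs : ∀ i, |φ i x| ≤ 2 * max (b i) 0 - φ i x := fun i =>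
    abs_le.2 ⟨by linarith [le_max_right (b i) 0], by linarith [hx i, le_max_left (b i) 0]⟩
  have hTx : ‖T x‖ ≤ ∑ i, (2 * max (b i) 0 - φ i x) :=
    (pi_norm_le_iff_of_nonneg (Finset.sum_nonneg fun i _ => (abs_nonneg _).trans (habs i))).2
      fun i => (habs i).trans (Finset.single_le_sum (fun j _ => (abs_nonneg _).trans (habs j))
        (Finset.mem_univ i))
  calc ‖x‖ ≤ K * ‖T x‖ := ZeroHomClass.bound_of_antilipschitz T hK x
    _ ≤ K * ∑ i, (2 * max (b i) 0 - φ i x) := by gcongr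
    _ = ((K : ℝ) • -∑ i, φ i) x + K * ∑ i, 2 * max (b i) 0 := by
      simp only [Finset.sum_sub_distrib, smul_neg, neg_apply, smul_apply, sum_apply, smul_eq_mul]
      ring

theorem onePoint_of_pointed_unbounded_polyhedron_homeomorph_closedBall_general
    (m : ℕ)
    (Q : Set (EuclideanSpace ℝ (Fin m)))
    (hpoly : ∃ (n : ℕ) (a : Fin n → EuclideanSpace ℝ (Fin m)) (b : Fin n → ℝ),
      Q = {x | ∀ i, inner ℝ (a i) x ≤ b i})
    (hint : (interior Q).Nonempty)
    (hunb : ¬ Bornology.IsBounded Q)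
    (hpointed : ¬ ∃ (x v : EuclideanSpace ℝ (Fin m)),
      v ≠ 0 ∧ ∀ t : ℝ, x + t • v ∈ Q) :
    Nonempty (OnePoint ↥Q ≃ₜ ↥{x : EuclideanSpace ℝ (Fin m) | ‖x‖ ≤ 1}) := by
  obtain ⟨n, a, b, hQ⟩ := hpoly
  replace hQ : Q = ⋂ i, {x | innerSL ℝ (a i) x ≤ b i} := by rw [hQ]; ext; simp
  have hlin : ∀ v, (∀ i, innerSL ℝ (a i) v = 0) → v = 0 := by
    obtain ⟨x₀, hx₀⟩ := hint.mono interior_subset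
    refine fun v hv => not_not.1 fun hv₀ => hpointed ⟨x₀, v, hv₀, fun t => ?_⟩
    rw [hQ, mem_iInter] at hx₀ ⊢
    intro i
    simpa only [mem_ofPred_eq, map_add, map_smul, hv i, smul_zero, add_zero] using hx₀ i
  obtain ⟨f, D, hfD⟩ := exists_norm_le_add_of_forall_apply_le _ b hlin
  have hconv : Convex ℝ Q :=
    hQ ▸ convex_iInter fun i => convex_halfSpace_le (innerSL ℝ (a i)).toLinearMap.isLinear (b i)
  have hclosed : IsClosed Q :=
    hQ ▸ isClosed_iInter fun i => isClosed_le (innerSL ℝ (a i)).continuous continuous_const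
  obtain ⟨e⟩ := nonempty_onePoint_homeomorph_closedBall_of_norm_le_add hconv hclosed hint hunb
    fun x hx => hfD x (mem_iInter.1 (hQ ▸ hx))
  exact ⟨e.trans (.setCongr (by ext; simp))⟩

/-- The one-point compactification of an unbounded pointed polyhedron with
nonempty interior in ℝ^m is homeomorphic to the closed unit ball. -/
theorem onePoint_of_pointed_unbounded_polyhedron_homeomorph_closedBall
    (m : ℕ) (hm : 1 ≤ m)
    (Q : Set (EuclideanSpace ℝ (Fin m)))
    (hpoly : ∃ (n : ℕ) (a : Fin n → EuclideanSpace ℝ (Fin m)) (b : Fin n → ℝ),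
      Q = {x | ∀ i, inner ℝ (a i) x ≤ b i})
    (hne : Q.Nonempty)
    (hint : (interior Q).Nonempty)
    (hunb : ¬ Bornology.IsBounded Q)
    (hpointed : ¬ ∃ (x v : EuclideanSpace ℝ (Fin m)),
      v ≠ 0 ∧ ∀ t : ℝ, x + t • v ∈ Q) :
    Nonempty (OnePoint ↥Q ≃ₜ ↥{x : EuclideanSpace ℝ (Fin m) | ‖x‖ ≤ 1}) :=
  onePoint_of_pointed_unbounded_polyhedron_homeomorph_closedBall_general m Q hpoly hint hunb
    hpointed
end Perspective
end

section
/- Let d ≥ 1 and δ ∈ ℝ, let A ⊆ {u ∈ ℝ^d : u_1 + ⋯ + u_d = δ} be a finite set that affinely spans the hyperplane {u : u_1 + ⋯ + u_d = δ}, and let ω : A → ℝ. Consider the dome D = {(x,s) ∈ ℝ^d × ℝ : s ≤ ω(u) + ⟨u,x⟩ for all u ∈ A}. Then the lineality space of D, namely {v ∈ ℝ^d × ℝ : ∀ p ∈ D, ∀ t ∈ ℝ, p + t•v ∈ D}, equals the line ℝ • (𝟙, δ), where 𝟙 = (1,…,1) ∈ ℝ^d. -/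
/-!
Moving a point of the dome along `v = (x, s)` changes the slack of the inequality indexed by
`u` by `t * (⟪u, x⟫ - s)`; since the dome is nonempty and `t` is arbitrary, `v` is a lineality
direction iff `⟪u, x⟫ = s` for every `u ∈ A`. This affine condition on `u` then holds on the
affine span of `A`, the hyperplane `⟪u, 𝟙⟫ = δ`, and an affine function vanishing on a
hyperplane is a multiple of its equation: `x = c • 𝟙` and `s = c * δ`.
-/

open scoped RealInnerProductSpace

lemma eq_zero_of_forall_mul_le {a b : ℝ} (h : ∀ t : ℝ, t * a ≤ b) : a = 0 := by
  by_contra ha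
  have h2 := h ((b + 1) / a)
  rw [div_mul_cancel₀ _ ha] at h2
  linarith

def linealitySpace {V : Type*} [AddCommGroup V] [Module ℝ V] (C : Set V) : Set V :=
  {v | ∀ p ∈ C, ∀ t : ℝ, p + t • v ∈ C}

section InnerProductSpace

variable {E : Type*} [NormedAddCommGroup E] [InnerProductSpace ℝ E]

def dome (A : Set E) (ω : E → ℝ) : Set (E × ℝ) :=
  {p | ∀ u ∈ A, p.2 ≤ ω u + ⟪u, p.1⟫}

theorem linealitySpace_dome {A : Set E} {ω : E → ℝ} (hω : BddBelow (ω '' A)) :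
    linealitySpace (dome A ω) = {v | ∀ u ∈ A, ⟪u, v.1⟫ = v.2} := by
  ext v
  constructor
  · intro hv u hu
    obtain ⟨m, hm⟩ := hω
    have h0 : ((0 : E), m) ∈ dome A ω := fun u hu => by
      simpa using hm (Set.mem_image_of_mem ω hu)
    have hbdd : ∀ t : ℝ, t * (v.2 - ⟪u, v.1⟫) ≤ ω u - m := fun t => by
      have := hv _ h0 t u hu
      simp only [Prod.fst_add, Prod.snd_add, Prod.smul_fst, Prod.smul_snd, smul_eq_mul,
        zero_add, inner_smul_right] at this
      linarith
    linarith [eq_zero_of_forall_mul_le hbdd]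
  · intro hv p hp t u hu
    have := hp u hu
    simp only [Prod.fst_add, Prod.snd_add, Prod.smul_fst, Prod.smul_snd, smul_eq_mul,
      inner_add_right, inner_smul_right, hv u hu]
    linarith

theorem inner_eq_of_mem_affineSpan {A : Set E} {x : E} {s : ℝ} (h : ∀ u ∈ A, ⟪u, x⟫ = s)
    {u : E} (hu : u ∈ affineSpan ℝ A) : ⟪u, x⟫ = s := by
  have hA : A.EqOn (innerₛₗ ℝ x).toAffineMap (AffineMap.const ℝ E s) := fun u hu => by
    simpa [real_inner_comm] using h u hu
  simpa [real_inner_comm] using AffineMap.eqOn_affineSpan hA hu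

theorem exists_eq_smul_of_inner_eq_on_hyperplane {a x : E} {δ s : ℝ} (ha : a ≠ 0)
    (h : ∀ u, ⟪u, a⟫ = δ → ⟪u, x⟫ = s) : ∃ c : ℝ, x = c • a ∧ s = c * δ := by
  set u₀ := (δ / ⟪a, a⟫) • a
  have hu₀ : ⟪u₀, a⟫ = δ := by
    rw [real_inner_smul_left, div_mul_cancel₀ _ (inner_self_ne_zero.mpr ha)]
  have hx : x ∈ (ℝ ∙ a)ᗮᗮ := by
    rw [Submodule.mem_orthogonal]
    intro w hw
    rw [Submodule.mem_orthogonal_singleton_iff_inner_right] at hw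
    have := h (u₀ + w) (by rw [inner_add_left, hu₀, real_inner_comm, hw, add_zero])
    rwa [inner_add_left, h u₀ hu₀, add_eq_left] at this
  rw [Submodule.orthogonal_orthogonal, Submodule.mem_span_singleton] at hx
  obtain ⟨c, rfl⟩ := hx
  refine ⟨c, rfl, ?_⟩
  rw [← h u₀ hu₀, real_inner_smul_right, hu₀]

end InnerProductSpace

theorem EuclideanSpace.sum_eq_inner_one {ι : Type*} [Fintype ι] (u : EuclideanSpace ℝ ι) :
    ∑ i, u i = ⟪u, WithLp.toLp 2 (fun _ => 1 : ι → ℝ)⟫ := by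
  simp [PiLp.inner_apply]

theorem lineality_space_of_dome_homogeneous_general
    (d : ℕ) (hd : 1 ≤ d) (δ : ℝ)
    (A : Set (EuclideanSpace ℝ (Fin d))) (hAfin : A.Finite)
    (hspan : (affineSpan ℝ A : Set (EuclideanSpace ℝ (Fin d))) =
      {u : EuclideanSpace ℝ (Fin d) | ∑ i, u i = δ})
    (ω : EuclideanSpace ℝ (Fin d) → ℝ)
    (D : Set (EuclideanSpace ℝ (Fin d) × ℝ))
    (hD : D = {p : EuclideanSpace ℝ (Fin d) × ℝ | ∀ u ∈ A, p.2 ≤ ω u + inner ℝ u p.1}) :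
    {v : EuclideanSpace ℝ (Fin d) × ℝ | ∀ p ∈ D, ∀ t : ℝ, p + t • v ∈ D} =
      {v : EuclideanSpace ℝ (Fin d) × ℝ |
        ∃ c : ℝ, v = c • ((WithLp.toLp 2 (fun _ => 1 : Fin d → ℝ) : EuclideanSpace ℝ (Fin d)), δ)} := by
  set ones : EuclideanSpace ℝ (Fin d) := WithLp.toLp 2 (fun _ => 1)
  have hones : ones ≠ 0 := fun h => by simpa [ones] using congrArg (· ⟨0, hd⟩) h
  have hhyp : ∀ u, u ∈ affineSpan ℝ A ↔ ⟪u, ones⟫ = δ := fun u => by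
    rw [← SetLike.mem_coe, hspan, Set.mem_ofPred_eq, EuclideanSpace.sum_eq_inner_one]
  subst hD
  change linealitySpace (dome A ω) = _
  rw [linealitySpace_dome (hAfin.image ω).bddBelow]
  ext ⟨x, s⟩
  simp only [Set.mem_ofPred_eq, Prod.smul_mk, Prod.mk.injEq, smul_eq_mul]
  constructor
  · intro h
    exact exists_eq_smul_of_inner_eq_on_hyperplane hones fun u hu =>
      inner_eq_of_mem_affineSpan h ((hhyp u).mpr hu)
  · rintro ⟨c, rfl, rfl⟩ u hu
    rw [real_inner_smul_right, (hhyp u).mp (subset_affineSpan ℝ A hu)]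

/-- For a point configuration affinely spanning the hyperplane of coordinate
sum δ, the lineality space of the dome is the line spanned by (𝟙, δ). -/
theorem lineality_space_of_dome_homogeneous
    (d : ℕ) (hd : 1 ≤ d) (δ : ℝ)
    (A : Set (EuclideanSpace ℝ (Fin d))) (hAfin : A.Finite)
    (hAsub : A ⊆ {u : EuclideanSpace ℝ (Fin d) | ∑ i, u i = δ})
    (hspan : (affineSpan ℝ A : Set (EuclideanSpace ℝ (Fin d))) =
      {u : EuclideanSpace ℝ (Fin d) | ∑ i, u i = δ})
    (ω : EuclideanSpace ℝ (Fin d) → ℝ)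
    (D : Set (EuclideanSpace ℝ (Fin d) × ℝ))
    (hD : D = {p : EuclideanSpace ℝ (Fin d) × ℝ | ∀ u ∈ A, p.2 ≤ ω u + inner ℝ u p.1}) :
    {v : EuclideanSpace ℝ (Fin d) × ℝ | ∀ p ∈ D, ∀ t : ℝ, p + t • v ∈ D} =
      {v : EuclideanSpace ℝ (Fin d) × ℝ |
        ∃ c : ℝ, v = c • ((WithLp.toLp 2 (fun _ => 1 : Fin d → ℝ) : EuclideanSpace ℝ (Fin d)), δ)} :=
  lineality_space_of_dome_homogeneous_general d hd δ A hAfin hspan ω D hD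
end

section
/- Let d ≥ 1 and n ≥ 1 be natural numbers. Then, in ℝ^d × ℝ, the cone {(x,s) : s ≤ n · min_{1 ≤ i ≤ d} x_i} equals the set {λ • (𝟙, n) + Σ_{i=1}^d μ_i • (e_i, 0) : λ ∈ ℝ, μ_1, …, μ_d ≥ 0}, where 𝟙 = (1,…,1) ∈ ℝ^d and e_i are the standard basis vectors of ℝ^d. In other words, this cone is the sum of the line spanned by (𝟙,n) and the simplicial cone spanned by the rays (e_i, 0) for i = 1, …, d. -/
/-!
Both sets consist of the points `(x, s)` with `s / n ≤ x i` for every `i`: on the left this is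
`min_i x_i ≥ s / n`; on the right the last coordinate forces `λ = s / n`, and then `μ = x - λ 𝟙`.
-/

section
variable {ι : Type*}

lemma smul_diag_add_sum_smul_single [Fintype ι] [DecidableEq ι] (c l : ℝ) (μ : ι → ℝ) :
    l • ((WithLp.toLp 2 (fun _ => 1), c) : EuclideanSpace ℝ ι × ℝ) +
        ∑ i, μ i • ((EuclideanSpace.single i (1 : ℝ), 0) : EuclideanSpace ℝ ι × ℝ) =
      (WithLp.toLp 2 (fun j => l + μ j), l * c) := by
  ext j
  · simp [Prod.fst_sum, WithLp.ofLp_sum, Pi.single_apply]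
  · simp [Prod.snd_sum, mul_comm]

lemma le_mul_ciInf_iff [Finite ι] [Nonempty ι] {c s : ℝ} (hc : 0 < c) (x : ι → ℝ) :
    s ≤ c * ⨅ i, x i ↔ ∀ i, s / c ≤ x i := by
  rw [← div_le_iff₀' hc, le_ciInf_iff (Set.finite_range x).bddBelow]

lemma exists_toLp_add_nonneg_iff {c : ℝ} (hc : c ≠ 0) (x : EuclideanSpace ℝ ι) (s : ℝ) :
    (∃ (l : ℝ) (μ : ι → ℝ), (∀ i, 0 ≤ μ i) ∧ x = WithLp.toLp 2 (fun j => l + μ j) ∧ s = l * c) ↔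
      ∀ i, s / c ≤ x i := by
  constructor
  · rintro ⟨l, μ, hμ, rfl, rfl⟩ i
    simpa [hc] using hμ i
  · intro hx
    refine ⟨s / c, fun i => x i - s / c, fun i => sub_nonneg.2 (hx i), ?_, by field_simp⟩
    ext j
    simp

end

/-- The cone {(x,s) : s ≤ n·min_i x_i} in ℝ^d × ℝ is the sum of the line
spanned by (𝟙, n) and the simplicial cone spanned by the rays (e_i, 0), i = 1, …, d. -/
theorem cone_eq_line_plus_simplicial_cone
    (d n : ℕ) (hd : 1 ≤ d) (hn : 1 ≤ n) :
    {p : EuclideanSpace ℝ (Fin d) × ℝ | p.2 ≤ (n : ℝ) * ⨅ i, p.1 i} =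
      {p : EuclideanSpace ℝ (Fin d) × ℝ |
        ∃ (l : ℝ) (μ : Fin d → ℝ), (∀ i, 0 ≤ μ i) ∧
          p = l • ((WithLp.toLp 2 (fun _ => 1), (n : ℝ)) : EuclideanSpace ℝ (Fin d) × ℝ) +
            ∑ i, μ i • ((EuclideanSpace.single i (1 : ℝ), 0) : EuclideanSpace ℝ (Fin d) × ℝ)} := by
  -- over `Fin 0` the infimum would be the junk value `sInf ∅ = 0`
  have : Nonempty (Fin d) := ⟨⟨0, hd⟩⟩
  have hn0 : (0 : ℝ) < n := by exact_mod_cast hn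
  ext ⟨x, s⟩
  simp only [Set.mem_ofPred_eq, smul_diag_add_sum_smul_single, Prod.mk.injEq]
  rw [le_mul_ciInf_iff hn0, exists_toLp_add_nonneg_iff hn0.ne']
end

section
/- Let d ≥ 1 and n ≥ 1, and let V be a real d × n matrix, V : Fin d → Fin n → ℝ. Consider the dome of the product of tropical linear forms, D(V) = {(x,s) ∈ ℝ^d × ℝ : s ≤ Σ_{j=1}^n min_{1 ≤ i ≤ d} (x_i − V_{ij})}. Then the recession cone of D(V) equals {(x,s) ∈ ℝ^d × ℝ : s ≤ n · min_{1 ≤ i ≤ d} x_i}; that is, {v : ∀ p ∈ D(V), ∀ t ≥ 0, p + t•v ∈ D(V)} = {(x,s) : s ≤ n·min_i x_i}. -/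
/-!
Write `L = L_V` and `m(y) = n · min_i y_i`. Adding a vector `y` moves every tropical linear form
by at least `min_i y_i`, so `L (x + y) ≥ L x + m y`; since `m` is positively homogeneous, every
`(y, s)` with `s ≤ m y` is a recession direction of the dome. Conversely, along a ray `t • y`
all forms are bounded above through the coordinate where `y` is minimal, so
`L (t • y) ≤ t · m y + C`; a recession direction `(y, s)` issued from `(0, L 0)` then forces
`t · s ≤ t · m y + C'` for all `t ≥ 0`, i.e. `s ≤ m y`.
-/

open Finset

section Hypograph

variable {E : Type*} [AddCommGroup E] [Module ℝ E]

def recessionCone (C : Set E) : Set E :=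
  {v | ∀ p ∈ C, ∀ t : ℝ, 0 ≤ t → p + t • v ∈ C}

def hypograph (F : E → ℝ) : Set (E × ℝ) :=
  {p | p.2 ≤ F p.1}

lemma nonpos_of_forall_nonneg_mul_le {a b : ℝ} (h : ∀ t : ℝ, 0 ≤ t → t * a ≤ b) : a ≤ 0 := by
  by_contra! ha
  have hb := h ((|b| + 1) / a) (by positivity)
  rw [div_mul_cancel₀ _ ha.ne'] at hb
  linarith [le_abs_self b]

lemma le_of_mem_recessionCone_hypograph {F g : E → ℝ} {v : E × ℝ}
    (hbound : ∃ C, ∀ t : ℝ, 0 ≤ t → F (t • v.1) ≤ t * g v.1 + C)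
    (hv : v ∈ recessionCone (hypograph F)) : v.2 ≤ g v.1 := by
  obtain ⟨C, hC⟩ := hbound
  have hray : ∀ t : ℝ, 0 ≤ t → t * (v.2 - g v.1) ≤ C - F 0 := fun t ht => by
    have hmem : F 0 + t * v.2 ≤ F (t • v.1) := by
      simpa [hypograph] using hv (0, F 0) (le_refl (F 0)) t ht
    linarith [hC t ht]
  linarith [nonpos_of_forall_nonneg_mul_le hray]

lemma mem_recessionCone_hypograph_of_le {F g : E → ℝ} {v : E × ℝ}
    (hsuper : ∀ x y, F x + g y ≤ F (x + y)) (hhom : ∀ t : ℝ, 0 ≤ t → ∀ y, g (t • y) = t * g y)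
    (hv : v.2 ≤ g v.1) : v ∈ recessionCone (hypograph F) := by
  intro p hp t ht
  calc p.2 + t * v.2 ≤ F p.1 + g (t • v.1) := by
        rw [hhom t ht]
        exact add_le_add hp (mul_le_mul_of_nonneg_left hv ht)
    _ ≤ F (p.1 + t • v.1) := hsuper _ _

theorem recessionCone_hypograph_eq {F g : E → ℝ}
    (hsuper : ∀ x y, F x + g y ≤ F (x + y)) (hhom : ∀ t : ℝ, 0 ≤ t → ∀ y, g (t • y) = t * g y)
    (hbound : ∀ y, ∃ C, ∀ t : ℝ, 0 ≤ t → F (t • y) ≤ t * g y + C) :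
    recessionCone (hypograph F) = hypograph g := by
  ext v
  exact ⟨le_of_mem_recessionCone_hypograph (hbound v.1),
    mem_recessionCone_hypograph_of_le hsuper hhom⟩

end Hypograph

section Tropical

variable {ι κ : Type*} [Fintype ι] [Nonempty ι] [Fintype κ]

noncomputable def tropicalFormProduct (V : ι → κ → ℝ) (x : ι → ℝ) : ℝ :=
  ∑ j, ⨅ i, (x i - V i j)

lemma tropicalFormProduct_add_card_mul_iInf_le (V : ι → κ → ℝ) (x y : ι → ℝ) :
    tropicalFormProduct V x + Fintype.card κ * ⨅ i, y i ≤ tropicalFormProduct V (x + y) := by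
  rw [tropicalFormProduct, tropicalFormProduct, ← nsmul_eq_mul, ← card_univ, ← sum_const,
    ← sum_add_distrib]
  refine sum_le_sum fun j _ => le_ciInf fun i => ?_
  have hx := ciInf_le (Finite.bddBelow_range fun i => x i - V i j) i
  have hy := ciInf_le (Finite.bddBelow_range y) i
  simp only [Pi.add_apply] at hx hy ⊢
  linarith

lemma tropicalFormProduct_smul_le (V : ι → κ → ℝ) (y : ι → ℝ) :
    ∃ C, ∀ t : ℝ, 0 ≤ t →
      tropicalFormProduct V (t • y) ≤ t * (Fintype.card κ * ⨅ i, y i) + C := by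
  obtain ⟨i₀, hi₀⟩ := exists_eq_ciInf_of_finite (f := y)
  refine ⟨-∑ j, V i₀ j, fun t _ => ?_⟩
  calc tropicalFormProduct V (t • y) ≤ ∑ j, (t * y i₀ - V i₀ j) :=
        sum_le_sum fun j _ => ciInf_le (Finite.bddBelow_range fun i => t * y i - V i j) i₀
    _ = t * (Fintype.card κ * ⨅ i, y i) + -∑ j, V i₀ j := by
        rw [sum_sub_distrib, sum_const, card_univ, nsmul_eq_mul, hi₀]
        ring

end Tropical

theorem recessionCone_dome_of_tropical_hyperplane_arrangement_general
    (d n : ℕ) (hd : 1 ≤ d)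
    (V : Fin d → Fin n → ℝ)
    (D : Set (EuclideanSpace ℝ (Fin d) × ℝ))
    (hD : D = {p : EuclideanSpace ℝ (Fin d) × ℝ |
      p.2 ≤ ∑ j : Fin n, ⨅ i : Fin d, (p.1 i - V i j)}) :
    {v : EuclideanSpace ℝ (Fin d) × ℝ | ∀ p ∈ D, ∀ t : ℝ, 0 ≤ t → p + t • v ∈ D} =
      {p : EuclideanSpace ℝ (Fin d) × ℝ | p.2 ≤ (n : ℝ) * ⨅ i, p.1 i} := by
  have : Nonempty (Fin d) := Fin.pos_iff_nonempty.mp hd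
  subst hD
  have hcard : (Fintype.card (Fin n) : ℝ) = n := by rw [Fintype.card_fin]
  refine recessionCone_hypograph_eq
    (F := fun x : EuclideanSpace ℝ (Fin d) => tropicalFormProduct V x.ofLp)
    (g := fun y => n * ⨅ i, y.ofLp i) (fun x y => ?_) (fun t ht y => ?_) (fun y => ?_)
  · simpa [hcard] using tropicalFormProduct_add_card_mul_iInf_le V x.ofLp y.ofLp
  · simp only [WithLp.ofLp_smul, Pi.smul_apply, smul_eq_mul, ← Real.mul_iInf_of_nonneg ht]
    ring
  · simpa [hcard] using tropicalFormProduct_smul_le V y.ofLp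

/-- The recession cone of the dome of a product of n min-tropical linear
forms on ℝ^d equals {(x,s) : s ≤ n·min_i x_i}. -/
theorem recessionCone_dome_of_tropical_hyperplane_arrangement
    (d n : ℕ) (hd : 1 ≤ d) (hn : 1 ≤ n)
    (V : Fin d → Fin n → ℝ)
    (D : Set (EuclideanSpace ℝ (Fin d) × ℝ))
    (hD : D = {p : EuclideanSpace ℝ (Fin d) × ℝ |
      p.2 ≤ ∑ j : Fin n, ⨅ i : Fin d, (p.1 i - V i j)}) :
    {v : EuclideanSpace ℝ (Fin d) × ℝ | ∀ p ∈ D, ∀ t : ℝ, 0 ≤ t → p + t • v ∈ D} =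
      {p : EuclideanSpace ℝ (Fin d) × ℝ | p.2 ≤ (n : ℝ) * ⨅ i, p.1 i} :=
  recessionCone_dome_of_tropical_hyperplane_arrangement_general d n hd V D hD
end

section
/- Let d ≥ 1, let U ⊆ ℝ^d be a finite set of nonzero vectors all of whose coordinates are nonnegative, let r : U → ℝ, and let w ∈ ℝ^d. Then there exists ε₀ > 0 such that for every ε with 0 < ε < ε₀ there exists t₀ ∈ ℝ such that for every t < t₀ the following holds: defining, for u ∈ U, λ(u) = (t − r(u) − ⟨u,w⟩ + ε^{d+1}) / (Σ_{i=1}^d u_i ε^i), one has λ(u) < 0 for every u ∈ U, and λ(u) < λ(u') whenever u, u' ∈ U and u is strictly smaller than u' in the lexicographic order on ℝ^d (comparing coordinates in the order 1, 2, …, d). -/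
/-!
For `ε > 0` the denominators `S_ε(u) = ∑ uᵢ εⁱ⁺¹` are positive, and if `u` is
lexicographically smaller than `u'`, first differing at `k`, then
`S_ε(u') - S_ε(u) = εᵏ⁺¹ ((u'ₖ - uₖ) + O(ε))` is positive for small `ε`. With `ε` fixed,
each `λ(u) = (t - c_u) / S_ε(u)` is affine in `t` with positive slope `1 / S_ε(u)`, so as
`t → -∞` every `λ(u)` becomes negative, and the steeper line (smaller `S_ε`) lies below.
-/

open Filter Topology

theorem sum_mul_pos_of_nonneg_of_ne_zero {ι : Type*} [Fintype ι] {u c : ι → ℝ}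
    (hu : 0 ≤ u) (hne : u ≠ 0) (hc : ∀ i, 0 < c i) : 0 < ∑ i, u i * c i := by
  obtain ⟨i, hi⟩ := Function.ne_iff.mp hne
  exact Finset.sum_pos' (fun j _ => mul_nonneg (hu j) (hc j).le)
    ⟨i, Finset.mem_univ i, mul_pos ((hu i).lt_of_ne' hi) (hc i)⟩

theorem eventually_pos_sum_mul_pow {n : ℕ} {v : Fin n → ℝ} {k : Fin n}
    (hv : ∀ j < k, v j = 0) (hk : 0 < v k) :
    ∀ᶠ ε in 𝓝[>] (0 : ℝ), 0 < ∑ i, v i * ε ^ (i : ℕ) := by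
  set g : ℝ → ℝ := fun ε => ∑ i, v i * ε ^ ((i : ℕ) - k)
  have hfactor : ∀ ε : ℝ, ∑ i, v i * ε ^ (i : ℕ) = ε ^ (k : ℕ) * g ε := by
    intro ε
    rw [Finset.mul_sum]
    refine Finset.sum_congr rfl fun i _ => ?_
    rcases lt_or_ge i k with hik | hki
    · simp [hv i hik]
    · rw [mul_left_comm, ← pow_add, Nat.add_sub_cancel' (Fin.le_def.mp hki)]
  have hg0 : g 0 = v k := by
    refine (Finset.sum_eq_single k (fun i _ hik => ?_) (by simp)).trans (by simp)
    rcases lt_or_gt_of_ne hik with hik | hki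
    · simp [hv i hik]
    · simp [Nat.sub_ne_zero_of_lt (Fin.lt_def.mp hki)]
  have hg : ∀ᶠ ε in 𝓝 (0 : ℝ), 0 < g ε :=
    (show Continuous g by fun_prop).continuousAt.eventually (eventually_gt_nhds (hg0 ▸ hk))
  filter_upwards [nhdsWithin_le_nhds hg, self_mem_nhdsWithin] with ε hgε (hε : 0 < ε)
  rw [hfactor]
  positivity

theorem eventually_sum_mul_pow_lt_of_toLex_lt {n : ℕ} {u u' : Fin n → ℝ}
    (h : toLex u < toLex u') :
    ∀ᶠ ε in 𝓝[>] (0 : ℝ), ∑ i, u i * ε ^ ((i : ℕ) + 1) < ∑ i, u' i * ε ^ ((i : ℕ) + 1) := by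
  obtain ⟨k, hagree, hk⟩ := h
  have hpos := eventually_pos_sum_mul_pow (v := u' - u) (k := k)
    (fun j hj => sub_eq_zero.mpr (hagree j hj).symm) (sub_pos.mpr hk)
  filter_upwards [hpos, self_mem_nhdsWithin] with ε hvε (hε : 0 < ε)
  have hdiff : ∑ i, u' i * ε ^ ((i : ℕ) + 1) - ∑ i, u i * ε ^ ((i : ℕ) + 1)
      = ε * ∑ i, (u' - u) i * ε ^ (i : ℕ) := by
    simp only [Finset.mul_sum, ← Finset.sum_sub_distrib, Pi.sub_apply]
    exact Finset.sum_congr rfl fun i _ => by ring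
  nlinarith [mul_pos hε hvε]

theorem eventually_sub_div_neg_atBot {A : ℝ} (hA : 0 < A) (c : ℝ) :
    ∀ᶠ t in atBot, (t - c) / A < 0 := by
  filter_upwards [eventually_lt_atBot c] with t ht
  exact div_neg_of_neg_of_pos (sub_neg.mpr ht) hA

theorem eventually_sub_div_lt_sub_div_atBot {A B : ℝ} (hA : 0 < A) (hAB : A < B) (c c' : ℝ) :
    ∀ᶠ t in atBot, (t - c) / A < (t - c') / B := by
  filter_upwards [eventually_lt_atBot ((c * B - c' * A) / (B - A))] with t ht
  rw [div_lt_div_iff₀ hA (hA.trans hAB)]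
  rw [lt_div_iff₀ (sub_pos.mpr hAB)] at ht
  linarith

theorem lex_line_shelling_parameters_general
    (d : ℕ)
    (U : Finset (EuclideanSpace ℝ (Fin d)))
    (hU : ∀ u ∈ U, u ≠ 0 ∧ ∀ i, 0 ≤ u i)
    (r : EuclideanSpace ℝ (Fin d) → ℝ)
    (w : EuclideanSpace ℝ (Fin d)) :
    ∃ ε₀ : ℝ, 0 < ε₀ ∧ ∀ ε : ℝ, 0 < ε → ε < ε₀ → ∃ t₀ : ℝ, ∀ t : ℝ, t < t₀ →
      (∀ u ∈ U,
        (t - r u - inner ℝ u w + ε ^ (d + 1)) / (∑ i : Fin d, u i * ε ^ ((i : ℕ) + 1)) < 0) ∧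
      (∀ u ∈ U, ∀ u' ∈ U,
        (∃ k : Fin d, (∀ j : Fin d, j < k → u j = u' j) ∧ u k < u' k) →
        (t - r u - inner ℝ u w + ε ^ (d + 1)) / (∑ i : Fin d, u i * ε ^ ((i : ℕ) + 1)) <
          (t - r u' - inner ℝ u' w + ε ^ (d + 1)) / (∑ i : Fin d, u' i * ε ^ ((i : ℕ) + 1))) := by
  have hS_pos : ∀ u ∈ U, ∀ ε : ℝ, 0 < ε → 0 < ∑ i : Fin d, u i * ε ^ ((i : ℕ) + 1) :=
    fun u hu ε hε => sum_mul_pos_of_nonneg_of_ne_zero (hU u hu).2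
      ((WithLp.ofLp_eq_zero 2).not.mpr (hU u hu).1) fun i => pow_pos hε _
  have hS_lt : ∀ᶠ ε in 𝓝[>] (0 : ℝ), ∀ u ∈ U, ∀ u' ∈ U,
      (∃ k : Fin d, (∀ j : Fin d, j < k → u j = u' j) ∧ u k < u' k) →
      ∑ i : Fin d, u i * ε ^ ((i : ℕ) + 1) < ∑ i : Fin d, u' i * ε ^ ((i : ℕ) + 1) := by
    simp only [eventually_all_finset, eventually_imp_distrib_left]
    -- the lexicographic hypothesis is `toLex u < toLex u'` by definition of `Pi.Lex`
    exact fun u _ u' _ hlex => eventually_sum_mul_pow_lt_of_toLex_lt hlex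
  obtain ⟨ε₀, hε₀, hsub⟩ := mem_nhdsGT_iff_exists_Ioo_subset.mp hS_lt
  refine ⟨ε₀, hε₀, fun ε hε hεε₀ => ?_⟩
  have hshift : ∀ t u,
      t - r u - inner ℝ u w + ε ^ (d + 1) = t - (r u + inner ℝ u w - ε ^ (d + 1)) :=
    fun _ _ => by ring
  simp only [hshift]
  refine (eventually_atBot.mp ?_).imp fun t₀ h t ht => h t ht.le
  simp only [eventually_and, eventually_all_finset, eventually_imp_distrib_left]
  exact ⟨fun u hu => eventually_sub_div_neg_atBot (hS_pos u hu ε hε) _,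
    fun u hu u' hu' hlex => eventually_sub_div_lt_sub_div_atBot (hS_pos u hu ε hε)
      (hsub ⟨hε, hεε₀⟩ u hu u' hu' hlex) _ _⟩

/-- The analytic core of the lexicographic line shelling: for small enough
ε > 0 and sufficiently negative t, the parameters λ(u) at which the line
(w,t) + ℝ·(ε, ε², …, ε^{d+1}) meets the hyperplanes {(x,s) : s = r(u) + ⟨u,x⟩} are all
negative and ordered according to the lexicographic order of the vectors u. -/
theorem lex_line_shelling_parameters
    (d : ℕ) (hd : 1 ≤ d)
    (U : Finset (EuclideanSpace ℝ (Fin d)))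
    (hU : ∀ u ∈ U, u ≠ 0 ∧ ∀ i, 0 ≤ u i)
    (r : EuclideanSpace ℝ (Fin d) → ℝ)
    (w : EuclideanSpace ℝ (Fin d)) :
    ∃ ε₀ : ℝ, 0 < ε₀ ∧ ∀ ε : ℝ, 0 < ε → ε < ε₀ → ∃ t₀ : ℝ, ∀ t : ℝ, t < t₀ →
      (∀ u ∈ U,
        (t - r u - inner ℝ u w + ε ^ (d + 1)) / (∑ i : Fin d, u i * ε ^ ((i : ℕ) + 1)) < 0) ∧
      (∀ u ∈ U, ∀ u' ∈ U,
        (∃ k : Fin d, (∀ j : Fin d, j < k → u j = u' j) ∧ u k < u' k) →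
        (t - r u - inner ℝ u w + ε ^ (d + 1)) / (∑ i : Fin d, u i * ε ^ ((i : ℕ) + 1)) <
          (t - r u' - inner ℝ u' w + ε ^ (d + 1)) / (∑ i : Fin d, u' i * ε ^ ((i : ℕ) + 1))) :=
  lex_line_shelling_parameters_general d U hU r w
end

section
/- Let d ≥ 1 and n ≥ 1, and let V be a real d × n matrix, V : Fin d → Fin n → ℝ. Then the max-tropical column span of V, namely the set T = {x ∈ ℝ^d : ∃ λ : Fin n → ℝ such that x_i = max_{1 ≤ j ≤ n} (λ_j + V_{ij}) for all i}, equipped with the subspace topology, is a nonempty contractible topological space. -/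
/-!
The max-plus product `λ ↦ V ⊙ λ` is left adjoint (for the coordinatewise order) to the
residuation `x ↦ (min_i (x_i - V_ij))_j`, so `V ⊙ (V♯ (V ⊙ λ)) = V ⊙ λ`. Hence the
tropical polytope, the image of `V ⊙ ·`, is a retract of the contractible space `ℝⁿ`.
-/

open Set

theorem ContractibleSpace.range_of_comp_comp_eq {X Y : Type*} [TopologicalSpace X]
    [TopologicalSpace Y] [ContractibleSpace X] {f : X → Y} {g : Y → X}
    (hf : Continuous f) (hg : Continuous g) (hfgf : f ∘ g ∘ f = f) :
    ContractibleSpace (range f) := by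
  let r : C(X, range f) := ⟨rangeFactorization f, hf.rangeFactorization⟩
  let s : C(range f, X) := ⟨g ∘ Subtype.val, hg.comp continuous_subtype_val⟩
  have hrs : r.comp s = ContinuousMap.id _ := by
    ext ⟨_, x, rfl⟩
    exact congrFun hfgf x
  rw [contractible_iff_id_nullhomotopic, ← hrs]
  exact ((id_nullhomotopic X).comp_right r).comp_left s

namespace MaxPlus

variable {ι κ : Type*} (V : ι → κ → ℝ)

noncomputable def mulVec (lam : κ → ℝ) : ι → ℝ := fun i => ⨆ j, lam j + V i j

noncomputable def residual (x : ι → ℝ) : κ → ℝ := fun j => ⨅ i, x i - V i j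

theorem gc_mulVec_residual [Finite ι] [Finite κ] [Nonempty ι] [Nonempty κ] :
    GaloisConnection (mulVec V) (residual V) := fun lam x => by
  simp only [Pi.le_def, mulVec, residual, ciSup_le_iff (Finite.bddAbove_range _),
    le_ciInf_iff (Finite.bddBelow_range _), le_sub_iff_add_le]
  exact forall_comm

theorem continuous_mulVec [Fintype κ] [Nonempty κ] : Continuous (mulVec V) := by
  refine continuous_pi fun i => ?_
  simp only [mulVec, ← Finset.sup'_univ_eq_ciSup]
  exact Continuous.finset_sup'_apply Finset.univ_nonempty
    fun j _ => (continuous_apply j).add continuous_const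

theorem continuous_residual [Fintype ι] [Nonempty ι] : Continuous (residual V) := by
  refine continuous_pi fun j => ?_
  simp only [residual, ← Finset.inf'_univ_eq_ciInf]
  exact Continuous.finset_inf'_apply Finset.univ_nonempty
    fun i _ => (continuous_apply i).sub continuous_const

end MaxPlus

open MaxPlus in
/-- A max-tropical polytope (the max-tropical column span of a real d×n
matrix) is nonempty and contractible. -/
theorem tropical_polytope_nonempty_contractible
    (d n : ℕ) (hd : 1 ≤ d) (hn : 1 ≤ n)
    (V : Fin d → Fin n → ℝ)
    (T : Set (EuclideanSpace ℝ (Fin d)))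
    (hT : T = {x : EuclideanSpace ℝ (Fin d) |
      ∃ lam : Fin n → ℝ, ∀ i, x i = ⨆ j, (lam j + V i j)}) :
    T.Nonempty ∧ ContractibleSpace T := by
  have : NeZero d := ⟨by omega⟩
  have : NeZero n := ⟨by omega⟩
  have hT_range : T = range (WithLp.toLp 2 ∘ mulVec V) := by
    ext x
    simp [hT, WithLp.ext_iff, funext_iff, eq_comm, mulVec]
  subst hT_range
  refine ⟨range_nonempty _, ContractibleSpace.range_of_comp_comp_eq
    ((PiLp.continuous_toLp 2 _).comp (continuous_mulVec V))
    ((continuous_residual V).comp (PiLp.continuous_ofLp 2 _)) ?_⟩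
  funext lam
  simp only [Function.comp_apply, (gc_mulVec_residual V).l_u_l_eq_l]
end
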